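/- Minimizing the total ℓ^p von Neumann stress over all pairs (σ_r, σ_c) of row and column permutations is equivalent to finding a minimum-weight Hamiltonian path in the complete graph on the rows with edge weights ω_{ik} = 2Σ_j |a_{ij} − a_{kj}|^p, and independently a minimum-weight Hamiltonian path in the complete graph on the columns with edge weights τ_{jℓ} = 2Σ_i |a_{ij} − a_{iℓ}|^p; in particular the optimal stress value equals the sum of the two minimum Hamiltonian path weights. -/

import Mathlib

/-!
Two cells are von Neumann neighbours iff they differ by one in exactly one coordinate, so the
stress splits into a vertical part, summed over pairs of adjacent rows, and a horizontal part,
summed over pairs of adjacent columns. Permuting the columns only reindexes the inner sum of the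
vertical part, so that part depends on `σr` alone; and since every adjacent pair is met in both
orders, it is the weight of the path `σr` for the doubled row distances `ω`. Symmetrically for
the columns. The stress is therefore a separable sum over `(σr, σc)`, and its minimum over the
finite set of pairs is the sum of the two minima.
-/

open Finset

/-- Total ℓᵖ stress of a matrix `B` under the von Neumann neighborhood. -/
noncomputable def stressVN (n m : ℕ) (p : ℝ) (B : Fin n → Fin m → ℝ) : ℝ :=
  ∑ k : Fin n, ∑ l : Fin m, ∑ k' : Fin n, ∑ l' : Fin m,
    if ((k' : ℤ) - (k : ℤ)) ^ 2 + ((l' : ℤ) - (l : ℤ)) ^ 2 = 1 then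
      |B k l - B k' l'| ^ p
    else 0

/-- Weight of the Hamiltonian path induced by the permutation `σ` on the complete
graph with edge weights `ω`: the sum of `ω i k` over consecutive pairs `(i, k)`. -/
noncomputable def pathWeight (n : ℕ) (ω : Fin n → Fin n → ℝ)
    (σ : Equiv.Perm (Fin n)) : ℝ :=
  ∑ i : Fin n, ∑ k : Fin n, if (σ k : ℕ) = (σ i : ℕ) + 1 then ω i k else 0

section LineNeighbours

variable {M : Type*} [AddCommMonoid M] {n : ℕ}

theorem Fin.intCast_sub_sq_eq_one_iff (k k' : Fin n) :
    ((k' : ℤ) - k) ^ 2 = 1 ↔ (k' : ℕ) = k + 1 ∨ (k : ℕ) = k' + 1 := by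
  rw [sq_eq_one_iff]
  omega

theorem sum_sum_ite_sub_sq_eq_one (g : Fin n → Fin n → M) :
    ∑ k : Fin n, ∑ k' : Fin n, (if ((k' : ℤ) - k) ^ 2 = 1 then g k k' else 0) =
      ∑ k : Fin n, ∑ k' : Fin n, if (k' : ℕ) = k + 1 then g k k' + g k' k else 0 := by
  have hsplit : ∀ k k' : Fin n, (if ((k' : ℤ) - k) ^ 2 = 1 then g k k' else 0) =
      (if (k' : ℕ) = k + 1 then g k k' else 0) + if (k : ℕ) = k' + 1 then g k k' else 0 := by
    intro k k'
    simp only [Fin.intCast_sub_sq_eq_one_iff]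
    split_ifs <;> first | omega | simp
  simp only [hsplit, sum_add_distrib, ite_add_zero]
  rw [sum_comm (f := fun k k' : Fin n => if (k : ℕ) = k' + 1 then g k k' else 0)]

theorem pathWeight_two_mul_eq (ω : Fin n → Fin n → ℝ) (hω : ∀ i k, ω i k = ω k i)
    (σ : Equiv.Perm (Fin n)) :
    pathWeight n (fun i k => 2 * ω i k) σ =
      ∑ k : Fin n, ∑ k' : Fin n,
        if ((k' : ℤ) - k) ^ 2 = 1 then ω (σ.symm k) (σ.symm k') else 0 := by
  rw [sum_sum_ite_sub_sq_eq_one, pathWeight]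
  refine Fintype.sum_equiv σ _ _ fun i => Fintype.sum_equiv σ _ _ fun k => ?_
  simp [two_mul, hω k i]

end LineNeighbours

theorem Int.sq_add_sq_eq_one_iff (a b : ℤ) :
    a ^ 2 + b ^ 2 = 1 ↔ a ^ 2 = 1 ∧ b = 0 ∨ a = 0 ∧ b ^ 2 = 1 := by
  have := sq_nonneg a
  have := sq_nonneg b
  constructor
  · intro h
    rcases (by omega : a ^ 2 = 0 ∨ b ^ 2 = 0) with h0 | h0 <;>
      simp only [sq_eq_zero_iff] at h0 <;> subst h0 <;> simp_all
  · rintro (⟨ha, rfl⟩ | ⟨rfl, hb⟩) <;> simp [*]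

theorem ite_sq_add_sq_eq_one {M : Type*} [AddCommMonoid M] (a b : ℤ) (x : M) :
    (if a ^ 2 + b ^ 2 = 1 then x else 0) =
      (if b = 0 then if a ^ 2 = 1 then x else 0 else 0) +
        if a = 0 then if b ^ 2 = 1 then x else 0 else 0 := by
  simp only [Int.sq_add_sq_eq_one_iff]
  split_ifs <;> simp_all

theorem stressVN_eq_add (n m : ℕ) (p : ℝ) (B : Fin n → Fin m → ℝ) :
    stressVN n m p B =
      ∑ k : Fin n, ∑ k' : Fin n,
          (if ((k' : ℤ) - k) ^ 2 = 1 then ∑ l : Fin m, |B k l - B k' l| ^ p else 0) +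
        ∑ l : Fin m, ∑ l' : Fin m,
          if ((l' : ℤ) - l) ^ 2 = 1 then ∑ k : Fin n, |B k l - B k l'| ^ p else 0 := by
  simp only [stressVN, ite_sq_add_sq_eq_one, sub_eq_zero, Nat.cast_inj, Fin.val_inj,
    sum_add_distrib, sum_ite_irrel, sum_const_zero, sum_ite_eq', mem_univ, if_true]
  congr 1
  · refine sum_congr rfl fun k _ => ?_
    rw [sum_comm]
    simp only [sum_ite_irrel, sum_const_zero]
  · rw [sum_comm]
    refine sum_congr rfl fun l _ => ?_
    rw [sum_comm]
    simp only [sum_ite_irrel, sum_const_zero]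

theorem stressVN_perm_eq_pathWeight_add (n m : ℕ) (p : ℝ) (A : Fin n → Fin m → ℝ)
    (σr : Equiv.Perm (Fin n)) (σc : Equiv.Perm (Fin m)) :
    stressVN n m p (fun k l => A (σr.symm k) (σc.symm l)) =
      pathWeight n (fun i k => 2 * ∑ j : Fin m, |A i j - A k j| ^ p) σr +
        pathWeight m (fun j l => 2 * ∑ i : Fin n, |A i j - A i l| ^ p) σc := by
  rw [stressVN_eq_add, pathWeight_two_mul_eq, pathWeight_two_mul_eq]
  · congr 1 <;> refine sum_congr rfl fun _ _ => sum_congr rfl fun _ _ => ?_ <;> congr 1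
    exacts [Equiv.sum_comp σc.symm (fun j => |A _ j - A _ j| ^ p),
      Equiv.sum_comp σr.symm (fun i => |A i _ - A i _| ^ p)]
  all_goals exact fun _ _ => sum_congr rfl fun _ _ => by rw [abs_sub_comm]

section Minimum

variable {α β : Type*}

theorem isLeast_setOf_exists_eq {f : α → ℝ} {a : α} (ha : ∀ a', f a ≤ f a') :
    IsLeast {w | ∃ a, w = f a} (f a) :=
  ⟨⟨a, rfl⟩, by rintro _ ⟨a', rfl⟩; exact ha a'⟩

theorem isLeast_setOf_exists_add {f : α → ℝ} {g : β → ℝ} {a : α} {b : β}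
    (ha : ∀ a', f a ≤ f a') (hb : ∀ b', g b ≤ g b') :
    IsLeast {s | ∃ a b, s = f a + g b} (f a + g b) :=
  ⟨⟨a, b, rfl⟩, by rintro _ ⟨a', b', rfl⟩; exact add_le_add (ha a') (hb b')⟩

end Minimum

theorem stressVN_min_eq_hamiltonian_paths_general (n m : ℕ)
    (p : ℝ) (A : Fin n → Fin m → ℝ) :
    (∃ (σr : Equiv.Perm (Fin n)) (σc : Equiv.Perm (Fin m)),
      stressVN n m p (fun k l => A (σr.symm k) (σc.symm l)) =
        sInf {s : ℝ | ∃ (σr : Equiv.Perm (Fin n)) (σc : Equiv.Perm (Fin m)),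
          s = stressVN n m p (fun k l => A (σr.symm k) (σc.symm l))}) ∧
    sInf {s : ℝ | ∃ (σr : Equiv.Perm (Fin n)) (σc : Equiv.Perm (Fin m)),
        s = stressVN n m p (fun k l => A (σr.symm k) (σc.symm l))} =
      sInf {w : ℝ | ∃ σr : Equiv.Perm (Fin n),
          w = pathWeight n (fun i k => 2 * ∑ j : Fin m, |A i j - A k j| ^ p) σr}
      + sInf {w : ℝ | ∃ σc : Equiv.Perm (Fin m),
          w = pathWeight m (fun j l => 2 * ∑ i : Fin n, |A i j - A i l| ^ p) σc} := by
  simp only [stressVN_perm_eq_pathWeight_add]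
  obtain ⟨σr, hσr⟩ := Finite.exists_min
    (pathWeight n fun i k => 2 * ∑ j : Fin m, |A i j - A k j| ^ p)
  obtain ⟨σc, hσc⟩ := Finite.exists_min
    (pathWeight m fun j l => 2 * ∑ i : Fin n, |A i j - A i l| ^ p)
  rw [(isLeast_setOf_exists_add hσr hσc).csInf_eq, (isLeast_setOf_exists_eq hσr).csInf_eq,
    (isLeast_setOf_exists_eq hσc).csInf_eq]
  exact ⟨⟨σr, σc, rfl⟩, rfl⟩

/-- Minimizing the total ℓᵖ von Neumann stress over all `(σr, σc)` is equivalent to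
independently finding minimum-weight Hamiltonian paths on rows (weights
`ω i k = 2 Σ_j |a_{ij} − a_{kj}|ᵖ`) and on columns (weights
`τ j ℓ = 2 Σ_i |a_{ij} − a_{iℓ}|ᵖ`), the minima being attained and the optimal
stress equal to the sum of the two minimum path weights. -/
theorem stressVN_min_eq_hamiltonian_paths (n m : ℕ) (hn : 1 ≤ n) (hm : 1 ≤ m)
    (p : ℝ) (hp : 1 ≤ p) (A : Fin n → Fin m → ℝ) :
    (∃ (σr : Equiv.Perm (Fin n)) (σc : Equiv.Perm (Fin m)),
      stressVN n m p (fun k l => A (σr.symm k) (σc.symm l)) =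
        sInf {s : ℝ | ∃ (σr : Equiv.Perm (Fin n)) (σc : Equiv.Perm (Fin m)),
          s = stressVN n m p (fun k l => A (σr.symm k) (σc.symm l))}) ∧
    sInf {s : ℝ | ∃ (σr : Equiv.Perm (Fin n)) (σc : Equiv.Perm (Fin m)),
        s = stressVN n m p (fun k l => A (σr.symm k) (σc.symm l))} =
      sInf {w : ℝ | ∃ σr : Equiv.Perm (Fin n),
          w = pathWeight n (fun i k => 2 * ∑ j : Fin m, |A i j - A k j| ^ p) σr}
      + sInf {w : ℝ | ∃ σc : Equiv.Perm (Fin m),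
          w = pathWeight m (fun j l => 2 * ∑ i : Fin n, |A i j - A i l| ^ p) σc} :=
  stressVN_min_eq_hamiltonian_paths_general n m p A
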